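/- Let (θ_j)_{j≥1} be a bounded sequence of pairwise distinct complex numbers that does NOT satisfy condition (1.2), and let (κ_j)_{j≥1} be a sequence of pairwise distinct complex numbers with dist({θ_j : j≥1}, {κ_j : j≥1}) > 0. Define η by η_{2k} := θ_k and η_{2k−1} := κ_k for k ≥ 1. Then there exists a bijection σ₂ of the positive integers such that the sequence (η_{σ₂(j)})_{j≥1} does not satisfy condition (1.2). -/

import Mathlib

open Complex Filter Finset Topology

/-- Divided differences over a list of points, evaluated at a point `w`:
`divDiff [ηₚ, …, η₁] h w = Δ_{p,(ηₚ,…,η₁)}(h)(w)`. -/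
noncomputable def divDiff : List ℂ → (ℂ → ℂ) → ℂ → ℂ
  | [], h, w => h w
  | a :: l, h, w => (divDiff l h w - divDiff l h a) / (w - a)

/-- `deltaP η h p = Δ_{p,(η_p,…,η_1)}(h)(η_{p+1})` (with 0-indexed `η`,
so the points are `η 0, …, η (p-1)` and the evaluation point is `η p`). -/
noncomputable def deltaP (η : ℕ → ℂ) (h : ℂ → ℂ) (p : ℕ) : ℂ :=
  divDiff (((List.range p).reverse).map η) h (η p)

/-- The interpolation formula `E_N(f;η)(z)` (with 0-indexed `η`, so that the
paper's points `η_1, …, η_N` are `η 0, …, η (N-1)`). -/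
noncomputable def EN (η : ℕ → ℂ) (f : ℂ × ℂ → ℂ) (N : ℕ) (z : ℂ × ℂ) : ℂ :=
  ∑ p ∈ Finset.range N,
    (∏ j ∈ Finset.Ico (p + 1) N, (z.1 - η j * z.2)) *
      ∑ q ∈ Finset.Icc p (N - 1),
        ((1 + η p * (starRingEnd ℂ) (η q)) / (1 + (Complex.normSq (η q) : ℂ))) *
          (∏ j ∈ (Finset.Icc p (N - 1)).erase q, (η q - η j))⁻¹ *
          ∑' n : ℕ,
            ((z.2 + (starRingEnd ℂ) (η q) * z.1) / (1 + (Complex.normSq (η q) : ℂ))) ^ n *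
              (1 / (Nat.factorial (N - 1 - p + n) : ℂ)) *
              iteratedDeriv (N - 1 - p + n) (fun v => f (η q * v, v)) 0

/-- `E_N(f;η)` converges to `f` uniformly on every compact subset of `ℂ²` as `N → ∞`. -/
def ENConverges (η : ℕ → ℂ) (f : ℂ × ℂ → ℂ) : Prop :=
  ∀ K : Set (ℂ × ℂ), IsCompact K →
    TendstoUniformlyOn (fun N z => EN η f N z) f Filter.atTop K

/-- A set `S ⊆ ℂ` is locally interpolable by real-analytic curves. -/
def LocallyInterpolable (S : Set ℂ) : Prop :=
  ∀ ζ ∈ closure S, ∃ V : Set ℂ, IsOpen V ∧ ζ ∈ V ∧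
    ∃ g : ℂ → ℂ, DifferentiableOn ℂ g V ∧ ∀ η ∈ S ∩ V, (starRingEnd ℂ) η = g η

/-- Condition (1.2) from Theorem 1. -/
def Cond12 (η : ℕ → ℂ) : Prop :=
  ∃ R : ℝ, 0 < R ∧ ∀ p q : ℕ,
    ‖deltaP η (fun ζ => ((starRingEnd ℂ) ζ / (1 + (Complex.normSq ζ : ℂ))) ^ q) p‖ ≤ R ^ (p + q)

/-!
Rearrange `η` so that `θ` keeps its order while the `κ`'s are inserted ever more sparsely:
`κ k` comes after `g k` terms of `θ`, where `2 ^ g k ≥ ∏_{c ≤ k} (1 + |κ c|)`. Then `θ = τ ∘ π`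
for the rearrangement `τ`, with `π p ≤ 2 p` and `∏_{i < π p} (1 + |τ i|) ≤ (2 (1 + M)) ^ p`.
If `τ` satisfied (1.2), expand `h_q` in the Newton basis `∏_{i < j} (z - τ i)` of `τ`: it agrees
with this expansion at `θ 0, …, θ p`, and the divided differences of the basis polynomials over
these bounded points grow only exponentially (a Leibniz rule), so `θ` would satisfy (1.2) too.
-/

namespace divDiff

theorem cons (a : ℂ) (l : List ℂ) (h : ℂ → ℂ) (w : ℂ) :
    divDiff (a :: l) h w = (divDiff l h w - divDiff l h a) / (w - a) := rfl

theorem congr {f g : ℂ → ℂ} :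
    ∀ {l : List ℂ} {w : ℂ}, (∀ x ∈ w :: l, f x = g x) → divDiff l f w = divDiff l g w
  | [], w, h => h w (by simp)
  | a :: l, w, h => by
    rw [cons, cons, congr fun x hx => h x ?_, congr fun x hx => h x ?_] <;>
      simp only [List.mem_cons] at hx ⊢ <;> tauto

theorem sum_mul {ι : Type*} (s : Finset ι) (c : ι → ℂ) (f : ι → ℂ → ℂ) :
    ∀ (l : List ℂ) (w : ℂ),
      divDiff l (fun z => ∑ j ∈ s, c j * f j z) w = ∑ j ∈ s, c j * divDiff l (f j) w
  | [], _ => rfl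
  | a :: l, w => by
    simp only [cons, sum_mul s c f l, ← Finset.sum_sub_distrib, Finset.sum_div]
    exact Finset.sum_congr rfl fun j _ => by ring

theorem const (c : ℂ) : ∀ (l : List ℂ) (w : ℂ),
    divDiff l (fun _ => c) w = if l = [] then c else 0
  | [], _ => rfl
  | a :: l, w => by simp [cons, const c l]

theorem sub_mul (c : ℂ) (f : ℂ → ℂ) :
    ∀ (a : ℂ) (l : List ℂ) (w : ℂ), (w :: a :: l).Nodup →
      divDiff (a :: l) (fun z => (z - c) * f z) w = (w - c) * divDiff (a :: l) f w + divDiff l f a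
  | a, [], w, hnd => by
    have hwa : w - a ≠ 0 := sub_ne_zero.mpr (by simp_all)
    simp only [divDiff]
    field_simp
    ring
  | a, b :: l, w, hnd => by
    have hwa : w - a ≠ 0 := sub_ne_zero.mpr (by simp_all)
    rw [cons a, sub_mul c f b l w (by simp_all), sub_mul c f b l a (by simp_all), cons a]
    field_simp
    ring

theorem norm_prod_sub_le {M : ℝ} (hM : 1 ≤ M) (c : ℕ → ℂ) :
    ∀ (j : ℕ) (l : List ℂ) (w : ℂ), (w :: l).Nodup → (∀ x ∈ w :: l, ‖x‖ ≤ M) →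
      ‖divDiff l (fun z => ∏ i ∈ Finset.range j, (z - c i)) w‖
        ≤ (∏ i ∈ Finset.range j, (M + ‖c i‖)) * 2 ^ (j + l.length)
  | 0, l, w, _, _ => by
    simp only [Finset.range_zero, Finset.prod_empty, const, one_mul, zero_add]
    split_ifs <;> simp [one_le_pow₀]
  | j + 1, [], w, _, hw => by
    have hwM : ‖w‖ ≤ M := hw w (by simp)
    rw [divDiff, norm_prod]
    refine (Finset.prod_le_prod (fun _ _ => norm_nonneg _)
      fun i _ => (norm_sub_le w (c i)).trans (by linarith)).trans
      (le_mul_of_one_le_right (Finset.prod_nonneg fun i _ => by positivity)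
        (one_le_pow₀ one_le_two))
  | j + 1, a :: l, w, hnd, hw => by
    have hPj : 0 ≤ ∏ i ∈ Finset.range j, (M + ‖c i‖) :=
      Finset.prod_nonneg fun i _ => by positivity
    have hwj : ‖w - c j‖ ≤ M + ‖c j‖ := (norm_sub_le _ _).trans (by linarith [hw w (by simp)])
    have h₁ := norm_prod_sub_le hM c j (a :: l) w hnd hw
    have h₂ := norm_prod_sub_le hM c j l a (List.Nodup.of_cons hnd)
      fun x hx => hw x (List.mem_cons_of_mem w hx)
    have hfactor : (fun z => ∏ i ∈ Finset.range (j + 1), (z - c i))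
        = fun z => (z - c j) * ∏ i ∈ Finset.range j, (z - c i) := by
      funext z; rw [Finset.prod_range_succ, mul_comm]
    rw [hfactor, sub_mul _ _ _ _ _ hnd, Finset.prod_range_succ]
    simp only [List.length_cons] at h₁ ⊢
    calc _ ≤ ‖w - c j‖ * ‖divDiff (a :: l) (fun z => ∏ i ∈ Finset.range j, (z - c i)) w‖
          + ‖divDiff l (fun z => ∏ i ∈ Finset.range j, (z - c i)) a‖ :=
          (norm_add_le _ _).trans (by rw [norm_mul])
      _ ≤ (M + ‖c j‖) * ((∏ i ∈ Finset.range j, (M + ‖c i‖)) * 2 ^ (j + (l.length + 1)))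
          + (∏ i ∈ Finset.range j, (M + ‖c i‖)) * 2 ^ (j + l.length) := by gcongr
      _ ≤ _ := by
          have hx : 1 ≤ M + ‖c j‖ := by linarith [norm_nonneg (c j)]
          rw [show j + 1 + (l.length + 1) = j + l.length + 2 by ring,
            show j + (l.length + 1) = j + l.length + 1 by ring, pow_succ, pow_succ, pow_succ]
          nlinarith [mul_nonneg hPj (pow_nonneg zero_le_two (j + l.length))]

end divDiff

theorem newton_expansion (τ : ℕ → ℂ) (h : ℂ → ℂ) : ∀ (m : ℕ) (w : ℂ), (∀ i < m, w ≠ τ i) →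
    h w = ∑ j ∈ Finset.range m, deltaP τ h j * ∏ i ∈ Finset.range j, (w - τ i)
      + divDiff ((List.range m).reverse.map τ) h w * ∏ i ∈ Finset.range m, (w - τ i)
  | 0, w, _ => by simp [divDiff]
  | m + 1, w, hw => by
    have hwm : w - τ m ≠ 0 := sub_ne_zero.mpr (hw m m.lt_succ_self)
    have hpts : (List.range (m + 1)).reverse.map τ = τ m :: (List.range m).reverse.map τ := by
      simp [List.range_succ]
    rw [newton_expansion τ h m w fun i hi => hw i (Nat.lt_succ_of_lt hi), hpts, divDiff.cons,
      Finset.sum_range_succ, Finset.prod_range_succ, deltaP]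
    field_simp
    ring

theorem newton_interpolation {τ : ℕ → ℂ} (hτ : Function.Injective τ) (h : ℂ → ℂ) {i m : ℕ}
    (him : i < m) :
    ∑ j ∈ Finset.range m, deltaP τ h j * ∏ i' ∈ Finset.range j, (τ i - τ i') = h (τ i) := by
  have hexp := newton_expansion τ h i (τ i) fun i' hi' => hτ.ne (Nat.ne_of_gt hi')
  have hterm : ∀ j ∈ Finset.range m, j ∉ Finset.range (i + 1) →
      deltaP τ h j * ∏ i' ∈ Finset.range j, (τ i - τ i') = 0 := fun j _ hj =>
    mul_eq_zero_of_right _ <| Finset.prod_eq_zero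
      (Finset.mem_range.mpr (by simp only [Finset.mem_range] at hj; omega)) (sub_self _)
  rw [← Finset.sum_subset (Finset.range_subset_range.mpr him) hterm, Finset.sum_range_succ, hexp]
  rfl

section Subsequence

variable {τ : ℕ → ℂ} (hτ : Function.Injective τ) {π : ℕ → ℕ}
include hτ

/-- `h` agrees with its Newton interpolant through `τ 0, …, τ (π p)` at all the points used. -/
theorem deltaP_comp_eq_sum (hπ : Monotone π) (h : ℂ → ℂ) (p : ℕ) :
    deltaP (τ ∘ π) h p = ∑ j ∈ Finset.range (π p + 1), deltaP τ h j *
      divDiff ((List.range p).reverse.map (τ ∘ π)) (fun z => ∏ i ∈ Finset.range j, (z - τ i))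
        (τ (π p)) := by
  rw [← divDiff.sum_mul]
  refine divDiff.congr fun x hx => ?_
  obtain ⟨t, ht, rfl⟩ : ∃ t ≤ p, τ (π t) = x := by
    simp only [List.mem_cons, List.mem_map, List.mem_reverse, List.mem_range] at hx
    rcases hx with rfl | ⟨t, ht, rfl⟩
    exacts [⟨p, le_rfl, rfl⟩, ⟨t, ht.le, rfl⟩]
  exact (newton_interpolation hτ h (Nat.lt_succ_of_le (hπ ht))).symm

theorem norm_deltaP_comp_le (hπ : StrictMono π) {M : ℝ} (hM1 : 1 ≤ M)
    (hM : ∀ t, ‖τ (π t)‖ ≤ M) {A R : ℝ} (hR : 1 ≤ R) {h : ℂ → ℂ}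
    (hA : ∀ j, ‖deltaP τ h j‖ ≤ A * R ^ j) (p : ℕ) :
    ‖deltaP (τ ∘ π) h p‖
      ≤ A * (4 * R * M) ^ π p * (∏ i ∈ Finset.range (π p), (1 + ‖τ i‖)) * 2 ^ p := by
  set P := ∏ i ∈ Finset.range (π p), (1 + ‖τ i‖)
  have hA0 : 0 ≤ A := by simpa using (norm_nonneg _).trans (hA 0)
  have hnodup : (τ (π p) :: (List.range p).reverse.map (τ ∘ π)).Nodup := by
    rw [← Function.comp_apply (f := τ), ← List.map_cons]
    refine List.Nodup.map (hτ.comp hπ.injective) (List.nodup_cons.mpr ⟨?_, ?_⟩)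
    · simp
    · exact List.nodup_reverse.mpr List.nodup_range
  have hpts : ∀ x ∈ τ (π p) :: (List.range p).reverse.map (τ ∘ π), ‖x‖ ≤ M := by
    simp only [List.mem_cons, List.mem_map, List.mem_reverse, List.mem_range]
    rintro x (rfl | ⟨t, -, rfl⟩)
    exacts [hM p, hM t]
  have hterm : ∀ j ∈ Finset.range (π p + 1), ‖deltaP τ h j *
      divDiff ((List.range p).reverse.map (τ ∘ π)) (fun z => ∏ i ∈ Finset.range j, (z - τ i))
        (τ (π p))‖ ≤ A * (2 * R * M) ^ π p * P * 2 ^ p := by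
    intro j hj
    have hjp : j ≤ π p := Nat.lt_succ_iff.mp (Finset.mem_range.mp hj)
    have hP1 : ∀ i, 1 ≤ 1 + ‖τ i‖ := fun i => by linarith [norm_nonneg (τ i)]
    have hprod : ∏ i ∈ Finset.range j, (M + ‖τ i‖) ≤ M ^ j * P := calc
      _ ≤ ∏ i ∈ Finset.range j, M * (1 + ‖τ i‖) :=
          Finset.prod_le_prod (fun i _ => by positivity) fun i _ => by nlinarith [norm_nonneg (τ i)]
      _ = M ^ j * ∏ i ∈ Finset.range j, (1 + ‖τ i‖) := by
          rw [Finset.prod_mul_distrib, Finset.prod_const, Finset.card_range]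
      _ ≤ M ^ j * P := by
          gcongr
          exact Finset.prod_le_prod_of_subset_of_one_le (Finset.range_subset_range.mpr hjp)
            (fun i _ => by positivity) fun i _ _ => hP1 i
    have hdd := divDiff.norm_prod_sub_le hM1 τ j _ _ hnodup hpts
    simp only [List.length_map, List.length_reverse, List.length_range] at hdd
    have hRMj : R ^ j * M ^ j * 2 ^ j ≤ (2 * R * M) ^ π p := by
      rw [← mul_pow, ← mul_pow, show R * M * 2 = 2 * R * M by ring]
      exact pow_le_pow_right₀ (by nlinarith) hjp
    rw [norm_mul]
    calc _ ≤ A * R ^ j * ((M ^ j * P) * 2 ^ (j + p)) :=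
          mul_le_mul (hA j) (hdd.trans (by gcongr)) (norm_nonneg _) (by positivity)
      _ = A * (R ^ j * M ^ j * 2 ^ j) * P * 2 ^ p := by ring
      _ ≤ _ := by gcongr
  calc _ ≤ ∑ j ∈ Finset.range (π p + 1), A * (2 * R * M) ^ π p * P * 2 ^ p := by
        rw [deltaP_comp_eq_sum hτ hπ.monotone]
        exact (norm_sum_le _ _).trans (Finset.sum_le_sum hterm)
    _ ≤ _ := by
        rw [Finset.sum_const, Finset.card_range, nsmul_eq_mul]
        have hcount : ((π p + 1 : ℕ) : ℝ) ≤ 2 ^ π p := by exact_mod_cast Nat.lt_two_pow_self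
        calc _ = ((π p + 1 : ℕ) : ℝ) * (2 * R * M) ^ π p * (A * P * 2 ^ p) := by ring
          _ ≤ 2 ^ π p * (2 * R * M) ^ π p * (A * P * 2 ^ p) := by gcongr
          _ = _ := by rw [← mul_pow]; ring

end Subsequence

theorem pow_add_one_mul_pow_le {B R : ℝ} (hB : 1 ≤ B) (hR : 1 ≤ R) {p q : ℕ} (hpq : p + q ≠ 0) :
    B ^ (p + 1) * R ^ q ≤ (B ^ 2 * R) ^ (p + q) := by
  rw [mul_pow, ← pow_mul]
  exact mul_le_mul (pow_le_pow_right₀ hB (by omega)) (pow_le_pow_right₀ hR (by omega))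
    (by positivity) (by positivity)

theorem Cond12.comp {τ : ℕ → ℂ} (hτ : Function.Injective τ) {π : ℕ → ℕ} (hπ : StrictMono π)
    {M : ℝ} (hM : ∀ t, ‖τ (π t)‖ ≤ M) {K : ℕ} (hK : ∀ p, π p ≤ K * (p + 1)) {C : ℝ}
    (hC : ∀ p, ∏ i ∈ Finset.range (π p), (1 + ‖τ i‖) ≤ C ^ p) (h : Cond12 τ) :
    Cond12 (τ ∘ π) := by
  obtain ⟨R₀, hR₀, hτR⟩ := h
  set R := max R₀ 1
  set M' := max M 1
  have hR : 1 ≤ R := le_max_right _ _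
  have hM' : 1 ≤ M' := le_max_right _ _
  have hC1 : 1 ≤ C :=
    (Finset.one_le_prod fun i _ => by simp : (1 : ℝ) ≤ _).trans ((hC 1).trans_eq (pow_one C))
  set B := (4 * R * M') ^ K * (2 * C)
  have hB : 1 ≤ B := one_le_mul_of_one_le_of_one_le (one_le_pow₀ (by nlinarith)) (by linarith)
  refine ⟨B ^ 2 * R, by positivity, fun p q => ?_⟩
  by_cases hpq : p + q = 0
  · obtain ⟨rfl, rfl⟩ : p = 0 ∧ q = 0 := by omega
    simp [deltaP, divDiff]
  refine (norm_deltaP_comp_le hτ hπ hM' (fun t => (hM t).trans (le_max_left _ _)) hR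
    (A := R ^ q) (fun j => ?_) p).trans ?_
  · rw [← pow_add, add_comm]
    exact (hτR j q).trans (pow_le_pow_left₀ hR₀.le (le_max_left _ _) _)
  refine le_trans ?_ (pow_add_one_mul_pow_le hB hR hpq)
  calc _ ≤ R ^ q * (4 * R * M') ^ (K * (p + 1)) * C ^ (p + 1) * 2 ^ (p + 1) := by
        gcongr
        · nlinarith
        · exact hK p
        · exact (hC p).trans (pow_le_pow_right₀ hC1 p.le_succ)
        · norm_num
        · omega
    _ = B ^ (p + 1) * R ^ q := by rw [pow_mul, mul_pow, ← mul_pow]; ring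

theorem exists_strictMono_two_pow_ge (b : ℕ → ℝ) :
    ∃ g : ℕ → ℕ, StrictMono g ∧ ∀ k, k + 1 ≤ g k ∧ b k ≤ 2 ^ g k := by
  choose n hn using fun k => pow_unbounded_of_one_lt (b k) (one_lt_two (α := ℝ))
  refine ⟨fun k => ∑ j ∈ Finset.range (k + 1), (n j + 1),
    strictMono_nat_of_lt_succ fun k => by simp [Finset.sum_range_succ _ (k + 1)], fun k => ⟨?_, ?_⟩⟩
  · simpa using Finset.card_nsmul_le_sum (Finset.range (k + 1)) (fun j => n j + 1) 1
      fun j _ => Nat.le_add_left 1 (n j)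
  · refine (hn k).le.trans (pow_le_pow_right₀ one_le_two ?_)
    exact (Nat.le_succ _).trans (Finset.single_le_sum (f := fun j => n j + 1)
      (fun j _ => Nat.zero_le _) (Finset.self_mem_range_succ k))

section Rearrangement

open Nat

section Interleave

variable {P : ℕ → Prop} [DecidablePred P]

theorem count_add_count_not (n : ℕ) : count P n + count (fun i => ¬P i) n = n := by
  induction n with
  | zero => simp
  | succ n ih => rw [count_succ, count_succ]; split_ifs <;> omega

theorem prod_range_ite_count {α : Type*} [CommMonoid α] (f g : ℕ → α) (n : ℕ) :
    ∏ i ∈ Finset.range n, (if P i then f (count P i) else g (count (fun j => ¬P j) i))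
      = (∏ c ∈ Finset.range (count P n), f c)
        * ∏ t ∈ Finset.range (count (fun j => ¬P j) n), g t := by
  induction n with
  | zero => simp
  | succ n ih =>
    rw [Finset.prod_range_succ, ih, count_succ, count_succ]
    by_cases hn : P n
    · simp [hn, Finset.prod_range_succ, mul_right_comm]
    · simp [hn, Finset.prod_range_succ, mul_assoc]

variable (P) in
def interleave (i : ℕ) : ℕ :=
  if P i then 2 * count P i else 2 * count (fun j => ¬P j) i + 1

theorem interleave_bijective (hP : {i | P i}.Infinite) (hP' : {i | ¬P i}.Infinite) :
    Function.Bijective (interleave P) := by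
  constructor
  · intro i j hij
    unfold interleave at hij
    by_cases hi : P i <;> by_cases hj : P j <;> simp only [hi, hj, if_true, if_false] at hij
    · exact count_injective hi hj (by omega)
    · omega
    · omega
    · exact count_injective (p := fun j => ¬P j) hi hj (by omega)
  · intro n
    obtain ⟨k, rfl | rfl⟩ := Nat.even_or_odd' n
    · exact ⟨nth P k, by simp [interleave, nth_mem_of_infinite hP, count_nth_of_infinite hP]⟩
    · exact ⟨nth (fun j => ¬P j) k, by
        simp [interleave, nth_mem_of_infinite hP' k, count_nth_of_infinite hP']⟩

theorem apply_interleave {β : Type*} {η κ θ : ℕ → β}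
    (hη : ∀ k, η k = if k % 2 = 0 then κ (k / 2) else θ (k / 2)) (i : ℕ) :
    η (interleave P i) = if P i then κ (count P i) else θ (count (fun j => ¬P j) i) := by
  unfold interleave
  split_ifs <;> rw [hη] <;> simp [Nat.add_div_of_dvd_right]

theorem nth_not_le_two_mul (hP' : {i | ¬P i}.Infinite)
    (hcount : ∀ p, count P (nth (fun j => ¬P j) p) ≤ p) (p : ℕ) :
    nth (fun j => ¬P j) p ≤ 2 * p := by
  have hsum := count_add_count_not (P := P) (nth (fun j => ¬P j) p)
  rw [count_nth_of_infinite hP'] at hsum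
  linarith [hcount p]

variable {β : Type*} {τ κ θ : ℕ → β}
  (hτ : ∀ i, τ i = if P i then κ (count P i) else θ (count (fun j => ¬P j) i))
  (hP' : {i | ¬P i}.Infinite)
include hτ hP'

theorem comp_nth_not : τ ∘ nth (fun j => ¬P j) = θ := funext fun t => by
  rw [Function.comp_apply, hτ, if_neg (nth_mem_of_infinite hP' t), count_nth_of_infinite hP']

theorem prod_range_nth_not_le (f : β → ℝ) (hf : ∀ x, 0 ≤ f x) {B : ℝ} (hθ : ∀ t, f (θ t) ≤ B)
    (hκ : ∀ p, ∏ c ∈ Finset.range (count P (nth (fun j => ¬P j) p)), f (κ c) ≤ 2 ^ p) (p : ℕ) :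
    ∏ i ∈ Finset.range (nth (fun j => ¬P j) p), f (τ i) ≤ (2 * B) ^ p := calc
  _ = (∏ c ∈ Finset.range (count P (nth (fun j => ¬P j) p)), f (κ c))
        * ∏ t ∈ Finset.range p, f (θ t) := by
      have hsplit := prod_range_ite_count (P := P) (fun c => f (κ c)) (fun t => f (θ t))
        (nth (fun j => ¬P j) p)
      rw [count_nth_of_infinite hP'] at hsplit
      rw [← hsplit]
      exact Finset.prod_congr rfl fun i _ => by rw [hτ]; split_ifs <;> rfl
  _ ≤ 2 ^ p * ∏ t ∈ Finset.range p, B :=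
      mul_le_mul (hκ p) (Finset.prod_le_prod (fun t _ => hf _) fun t _ => hθ t)
        (Finset.prod_nonneg fun t _ => hf _) (by positivity)
  _ = (2 * B) ^ p := by simp [mul_pow]

end Interleave

theorem StrictMono.count_mem_range {s : ℕ → ℕ} (hs : StrictMono s)
    [DecidablePred (· ∈ Set.range s)] (k : ℕ) : count (· ∈ Set.range s) (s k) = k := by
  have hfilter : {i ∈ Finset.range (s k) | i ∈ Set.range s} = (Finset.range k).image s := by
    ext i
    simp only [Finset.mem_filter, Finset.mem_range, Finset.mem_image, Set.mem_range]
    constructor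
    · rintro ⟨hlt, j, rfl⟩
      exact ⟨j, hs.lt_iff_lt.mp hlt, rfl⟩
    · rintro ⟨j, hj, rfl⟩
      exact ⟨hs hj, j, rfl⟩
  rw [count_eq_card_filter_range, hfilter, Finset.card_image_of_injective _ hs.injective,
    Finset.card_range]

section Slots

/- `κ k` is placed at position `g k + k`, i.e. right after `g k` terms of `θ`. -/

variable {g : ℕ → ℕ} (hg : StrictMono g)
include hg

theorem infinite_range_add_self : {i | i ∈ Set.range fun k => g k + k}.Infinite :=
  Set.infinite_range_of_injective (hg.add strictMono_id).injective

theorem infinite_compl_range_add_self : {i | i ∉ Set.range fun k => g k + k}.Infinite := by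
  refine Set.infinite_of_injective_forall_mem (f := fun k => g k + k + 1)
    (fun i j h => (hg.add strictMono_id).injective (by simpa using h)) fun k => ?_
  rintro ⟨j, hj⟩
  simp only at hj
  rcases lt_trichotomy j k with h | rfl | h
  · have := hg h; omega
  · omega
  · have := hg (Nat.lt_of_lt_of_le (Nat.lt_succ_self k) h); omega

variable [DecidablePred (· ∈ Set.range fun k => g k + k)]

theorem le_of_lt_count_nth_compl {p k : ℕ}
    (hk : k < count (· ∈ Set.range fun k => g k + k)
      (nth (· ∉ Set.range fun k => g k + k) p)) : g k ≤ p := by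
  have hs : StrictMono fun k => g k + k := hg.add strictMono_id
  have hnth : nth (· ∈ Set.range fun k => g k + k) k = g k + k := by
    have := nth_count (p := (· ∈ Set.range fun k => g k + k)) ⟨k, rfl⟩
    rwa [hs.count_mem_range] at this
  have hlt := nth_lt_of_lt_count hk
  rw [hnth] at hlt
  have hcount := count_monotone (fun i => i ∉ Set.range fun k => g k + k) hlt.le
  rw [count_nth_of_infinite (infinite_compl_range_add_self hg)] at hcount
  have hsum := count_add_count_not (P := (· ∈ Set.range fun k => g k + k)) (g k + k)
  rw [hs.count_mem_range] at hsum
  omega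

theorem count_nth_compl_le_and_prod_le {a : ℕ → ℝ}
    (ha : ∀ k, k + 1 ≤ g k ∧ ∏ c ∈ Finset.range (k + 1), a c ≤ 2 ^ g k) (p : ℕ) :
    count (· ∈ Set.range fun k => g k + k) (nth (· ∉ Set.range fun k => g k + k) p) ≤ p ∧
      ∏ c ∈ Finset.range (count (· ∈ Set.range fun k => g k + k)
        (nth (· ∉ Set.range fun k => g k + k) p)), a c ≤ 2 ^ p := by
  rcases h : count (· ∈ Set.range fun k => g k + k) (nth (· ∉ Set.range fun k => g k + k) p)
    with _ | k
  · simp [one_le_pow₀]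
  · have hgk := le_of_lt_count_nth_compl hg (p := p) (k := k) (by omega)
    exact ⟨(ha k).1.trans hgk, (ha k).2.trans (pow_le_pow_right₀ one_le_two hgk)⟩

end Slots

end Rearrangement

theorem injective_of_eq_ite_mod_two {β : Type*} {η κ θ : ℕ → β} (hκ : Function.Injective κ)
    (hθ : Function.Injective θ) (hκθ : ∀ c t, κ c ≠ θ t)
    (hη : ∀ k, η k = if k % 2 = 0 then κ (k / 2) else θ (k / 2)) : Function.Injective η := by
  intro i j h
  rw [hη, hη] at h
  split_ifs at h with hi hj hj
  · have := hκ h; omega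
  · exact absurd h (hκθ _ _)
  · exact absurd h.symm (hκθ _ _)
  · have := hθ h; omega

/-- Lemma: a permutation of the interleaved sequence violating (1.2). -/
theorem stmt14 (θ κ : ℕ → ℂ)
    (hθbdd : ∃ M : ℝ, ∀ j, ‖θ j‖ ≤ M)
    (hθinj : Function.Injective θ) (hθnot : ¬ Cond12 θ)
    (hκinj : Function.Injective κ)
    (hdist : ∃ d : ℝ, 0 < d ∧ ∀ i j, d ≤ dist (θ i) (κ j))
    (η : ℕ → ℂ)
    (hη : ∀ k, η k = if k % 2 = 0 then κ (k / 2) else θ (k / 2)) :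
    ∃ σ₂ : ℕ → ℕ, Function.Bijective σ₂ ∧ ¬ Cond12 (η ∘ σ₂) := by
  classical
  obtain ⟨M, hM⟩ := hθbdd
  have hκθ : ∀ c t, κ c ≠ θ t := fun c t h => by
    obtain ⟨d, hd, hθκ⟩ := hdist
    exact (hθκ t c).not_gt (by rw [h, dist_self]; exact hd)
  obtain ⟨g, hg, hgκ⟩ :=
    exists_strictMono_two_pow_ge fun k => ∏ c ∈ Finset.range (k + 1), (1 + ‖κ c‖)
  have hS' := infinite_compl_range_add_self hg
  have hσ := interleave_bijective (infinite_range_add_self hg) hS'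
  refine ⟨interleave (· ∈ Set.range fun k => g k + k), hσ, fun hC => hθnot ?_⟩
  have hτ := apply_interleave (P := (· ∈ Set.range fun k => g k + k)) hη
  have hcount := count_nth_compl_le_and_prod_le hg hgκ
  rw [← comp_nth_not hτ hS']
  exact Cond12.comp ((injective_of_eq_ite_mod_two hκinj hθinj hκθ hη).comp hσ.injective)
    (Nat.nth_strictMono hS') (fun t => comp_nth_not hτ hS' ▸ hM t) (K := 2)
    (fun p => (nth_not_le_two_mul hS' (fun p => (hcount p).1) p).trans (by omega))
    (prod_range_nth_not_le hτ hS' (fun z => 1 + ‖z‖) (fun z => by positivity) (B := 1 + M)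
      (fun t => by linarith [hM t]) fun p => (hcount p).2) hC
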